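/- Let n₁, …, n_s ≥ 1 be integers with p = n₁ + ⋯ + n_s, let M = diag(N_{n₁}, …, N_{n_s}) be the p×p block-diagonal matrix of nilpotent Jordan blocks (ones on each block's superdiagonal), and set n_max := max_ℓ n_ℓ. Let λ ∈ ℂ, m ≥ 1 an integer, and R a p×p real matrix with nonnegative entries. Define β_i^{(k)} for 0 ≤ i ≤ n_max−1 by β_0^{(0)} := λ, β_1^{(0)} := 1 (when n_max ≥ 2), β_i^{(0)} := 0 for i ≥ 2, and β_0^{(k+1)} := (λ+k+1)·β_0^{(k)}, β_i^{(k+1)} := (λ+k+1)·β_i^{(k)} + β_{i−1}^{(k)} for i ≥ 1; let C_k := ∑_{i=0}^{n_max−1} β_i^{(k)}·M^i. Let rr be the 1×p row vector with rr_j := max_i R_{ij} and 1_p the all-ones column vector. For each ℓ and k, let R^{(ℓ)} be the columns of R in block ℓ, rc^{(ℓ)} ∈ ℝ^p with rc^{(ℓ)}_i := max_j (R^{(ℓ)})_{ij}, w^{(k,ℓ)} the 1×n_ℓ row vector whose j-th entry is ∑_{i=0}^{j−1}|β_i^{(k)}|, and 𝖰_k := [rc^{(1)}·w^{(k,1)},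 …, rc^{(s)}·w^{(k,s)}]. Define 𝖱₀ := R and 𝖱_{k+1} := 𝖰_k + |λ+k+1|·𝖱_k + M·𝖱_k + (1_p·rr)·𝖱_k for k = 0, …, m−2. Then for any p×p complex matrices B₀, …, B_{m−1} with |B_i − ((λ+i)·I_p + M)| ≤ R entrywise for all i, one has | B_{m−1}·B_{m−2}·⋯·B₀ − C_{m−1} | ≤ 𝖱_{m−1} entrywise. -/

import Mathlib

/-!
The unperturbed product `∏ ((λ + i) I + M)` is a polynomial in the nilpotent `M`, hence a
block-diagonal upper triangular Toeplitz matrix, and its coefficients obey exactly the recursion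
defining `β^{(k)}`; so it equals `C_k`. For the perturbed product, with `A = (λ + k + 1) I + M`,
`B P - A C = (B - A) C + A (P - C) + (B - A) (P - C)`, and bounding each term entrywise using
`|A| = |λ + k + 1| I + M`, `R |C_k| ≤ 𝖰_k` and `R ≤ 1_p · rr` gives the recursion for `𝖱_k`.
-/

/-- The block-diagonal matrix of nilpotent Jordan blocks (real version):
entry 1 exactly at the superdiagonal positions within each block. -/
def jordanDiagR {s : ℕ} (n : Fin s → ℕ) :
    Matrix ((ℓ : Fin s) × Fin (n ℓ)) ((ℓ : Fin s) × Fin (n ℓ)) ℝ :=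
  Matrix.of fun a b => if a.1 = b.1 ∧ (b.2 : ℕ) = (a.2 : ℕ) + 1 then 1 else 0

/-- The block-diagonal matrix of nilpotent Jordan blocks (complex version). -/
def jordanDiagC {s : ℕ} (n : Fin s → ℕ) :
    Matrix ((ℓ : Fin s) × Fin (n ℓ)) ((ℓ : Fin s) × Fin (n ℓ)) ℂ :=
  Matrix.of fun a b => if a.1 = b.1 ∧ (b.2 : ℕ) = (a.2 : ℕ) + 1 then 1 else 0

/-- `beta lam k i` is the coefficient β_i^{(k)}: β_0^{(0)} = λ, β_1^{(0)} = 1,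
β_i^{(0)} = 0 for i ≥ 2, and β_0^{(k+1)} = (λ+k+1)β_0^{(k)},
β_i^{(k+1)} = (λ+k+1)β_i^{(k)} + β_{i−1}^{(k)} for i ≥ 1. -/
noncomputable def beta (lam : ℂ) : ℕ → ℕ → ℂ
  | 0 => fun i => if i = 0 then lam else if i = 1 then 1 else 0
  | (k + 1) => fun i =>
      (lam + k + 1) * beta lam k i + if i = 0 then 0 else beta lam k (i - 1)

/-- The matrix `𝖰_k = [rc^{(1)}·w^{(k,1)}, …, rc^{(s)}·w^{(k,s)}]`, where
`rc^{(ℓ)}_i = max_j R_{i,(ℓ,j)}` and the `j`-th entry of `w^{(k,ℓ)}` is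
`∑_{t=0}^{j} |β_t^{(k)}|`. -/
noncomputable def Qmat {s : ℕ} (n : Fin s → ℕ) (lam : ℂ)
    (R : Matrix ((ℓ : Fin s) × Fin (n ℓ)) ((ℓ : Fin s) × Fin (n ℓ)) ℝ) (k : ℕ) :
    Matrix ((ℓ : Fin s) × Fin (n ℓ)) ((ℓ : Fin s) × Fin (n ℓ)) ℝ :=
  Matrix.of fun i j => (⨆ a : Fin (n j.1), R i ⟨j.1, a⟩) *
    ∑ t ∈ Finset.range ((j.2 : ℕ) + 1), ‖beta lam k t‖

/-- The matrix `1_p · rr`, where `rr_j = max_i R_{ij}`. -/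
noncomputable def colMaxMat {ι : Type*} [Fintype ι] (R : Matrix ι ι ℝ) : Matrix ι ι ℝ :=
  Matrix.of fun _ j => ⨆ i, R i j

/-- The radius sequence 𝖱₀ := R,
`𝖱_{k+1} := 𝖰_k + |λ+k+1|·𝖱_k + M·𝖱_k + (1_p·rr)·𝖱_k`. -/
noncomputable def RseqJ {s : ℕ} (n : Fin s → ℕ) (lam : ℂ)
    (R : Matrix ((ℓ : Fin s) × Fin (n ℓ)) ((ℓ : Fin s) × Fin (n ℓ)) ℝ) :
    ℕ → Matrix ((ℓ : Fin s) × Fin (n ℓ)) ((ℓ : Fin s) × Fin (n ℓ)) ℝ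
  | 0 => R
  | (k + 1) => Qmat n lam R k + ‖lam + k + 1‖ • RseqJ n lam R k +
      jordanDiagR n * RseqJ n lam R k + colMaxMat R * RseqJ n lam R k

section MatrixBounds

variable {l m o 𝕜 : Type*} [Fintype m] [NonUnitalSeminormedRing 𝕜]

theorem norm_mul_apply_le_of_le {X : Matrix l m 𝕜} {Y : Matrix m o 𝕜}
    {R : Matrix l m ℝ} {E : Matrix m o ℝ}
    (hX : ∀ i k, ‖X i k‖ ≤ R i k) (hY : ∀ k j, ‖Y k j‖ ≤ E k j) (i : l) (j : o) :
    ‖(X * Y) i j‖ ≤ (R * E) i j :=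
  (norm_sum_le _ _).trans <| Finset.sum_le_sum fun k _ =>
    (norm_mul_le _ _).trans <|
      mul_le_mul (hX i k) (hY k j) (norm_nonneg _) ((norm_nonneg _).trans (hX i k))

theorem norm_mul_sub_mul_apply_le {A A₀ : Matrix l m 𝕜} {P P₀ : Matrix m o 𝕜}
    {R : Matrix l m ℝ} {E : Matrix m o ℝ}
    (hA : ∀ i k, ‖(A - A₀) i k‖ ≤ R i k) (hP : ∀ k j, ‖(P - P₀) k j‖ ≤ E k j) (i : l) (j : o) :
    ‖(A * P - A₀ * P₀) i j‖ ≤ (R * P₀.map (‖·‖) + A₀.map (‖·‖) * E + R * E) i j := by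
  have hsplit : A * P - A₀ * P₀ = (A - A₀) * P₀ + A₀ * (P - P₀) + (A - A₀) * (P - P₀) := by
    simp only [Matrix.sub_mul, Matrix.mul_sub]; abel
  simp only [hsplit, Matrix.add_apply]
  refine norm_add₃_le.trans (add_le_add (add_le_add ?_ ?_) ?_)
  · exact norm_mul_apply_le_of_le hA (fun _ _ => le_rfl) i j
  · exact norm_mul_apply_le_of_le (fun _ _ => le_rfl) hP i j
  · exact norm_mul_apply_le_of_le hA hP i j

end MatrixBounds

theorem mul_apply_le_colMaxMat_mul_apply {ι : Type*} [Fintype ι] (R E : Matrix ι ι ℝ)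
    (hE : ∀ i j, 0 ≤ E i j) (a b : ι) : (R * E) a b ≤ (colMaxMat R * E) a b :=
  Finset.sum_le_sum fun t _ => mul_le_mul_of_nonneg_right
    (le_ciSup (Set.finite_range fun i => R i t).bddAbove a) (hE t b)

section JordanBlocks

variable {s : ℕ} {n : Fin s → ℕ}

local notation "ι" => (ℓ : Fin s) × Fin (n ℓ)

theorem sigma_fin_eq_iff {a b : ι} : a = b ↔ a.1 = b.1 ∧ (a.2 : ℕ) = b.2 := by
  obtain ⟨ℓ, i⟩ := a
  obtain ⟨ℓ', j⟩ := b
  constructor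
  · rintro ⟨⟩; exact ⟨rfl, rfl⟩
  · rintro ⟨rfl, h⟩; exact congrArg _ (Fin.ext h)

theorem jordanDiagC_mul_apply (X : Matrix ι ι ℂ) (a b : ι) :
    (jordanDiagC n * X) a b =
      if h : (a.2 : ℕ) + 1 < n a.1 then X ⟨a.1, ⟨a.2 + 1, h⟩⟩ b else 0 := by
  rw [Matrix.mul_apply]
  split_ifs with h
  · have hsucc : ∀ c : ι, (a.1 = c.1 ∧ (c.2 : ℕ) = a.2 + 1) ↔ ⟨a.1, ⟨a.2 + 1, h⟩⟩ = c :=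
      fun c => by
        rw [sigma_fin_eq_iff]; constructor <;> rintro ⟨h1, h2⟩ <;> exact ⟨h1, h2.symm⟩
    simp only [jordanDiagC, Matrix.of_apply, hsucc, ite_mul, one_mul, zero_mul,
      Finset.sum_ite_eq, Finset.mem_univ, if_true]
  · refine Finset.sum_eq_zero fun c _ => ?_
    rw [jordanDiagC, Matrix.of_apply, if_neg, zero_mul]
    rintro ⟨hc, hc'⟩
    have := c.2.isLt
    have := congrArg n hc
    omega

theorem jordanDiagC_pow_apply (t : ℕ) (a b : ι) :
    (jordanDiagC n ^ t) a b = if a.1 = b.1 ∧ (b.2 : ℕ) = a.2 + t then 1 else 0 := by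
  induction t generalizing a with
  | zero => simp only [pow_zero, Matrix.one_apply, sigma_fin_eq_iff, add_zero, eq_comm]
  | succ t ih =>
    obtain ⟨ℓ, i⟩ := a
    obtain ⟨ℓ', j⟩ := b
    have := j.isLt
    rw [pow_succ', jordanDiagC_mul_apply]
    simp only [ih]
    split_ifs <;> grind

variable (n) in
/-- The polynomials in `jordanDiagC n`: on each block, the upper triangular Toeplitz matrix
with first row `f 0, f 1, …`. -/
def blockToeplitz (f : ℕ → ℂ) : Matrix ι ι ℂ :=
  Matrix.of fun a b => if a.1 = b.1 ∧ (a.2 : ℕ) ≤ b.2 then f (b.2 - a.2) else 0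

theorem sum_smul_jordanDiagC_pow (f : ℕ → ℂ) :
    ∑ i ∈ Finset.range (Finset.univ.sup n), f i • jordanDiagC n ^ i = blockToeplitz n f := by
  ext a b
  have hlt : (b.2 : ℕ) < Finset.univ.sup n :=
    b.2.isLt.trans_le (Finset.le_sup (Finset.mem_univ b.1))
  have hcond : ∀ i, (a.1 = b.1 ∧ (b.2 : ℕ) = a.2 + i) ↔
      (a.1 = b.1 ∧ (a.2 : ℕ) ≤ b.2) ∧ (b.2 : ℕ) - a.2 = i := fun i => by omega
  simp only [Matrix.sum_apply, Matrix.smul_apply, jordanDiagC_pow_apply, hcond, ite_and,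
    smul_eq_mul, mul_ite, mul_one, mul_zero, blockToeplitz, Matrix.of_apply]
  split_ifs
  · rw [Finset.sum_ite_eq, if_pos (Finset.mem_range.2 (by omega))]
  all_goals exact Finset.sum_const_zero

theorem smul_one_add_jordanDiagC_mul_blockToeplitz (μ : ℂ) (f : ℕ → ℂ) :
    (μ • 1 + jordanDiagC n) * blockToeplitz n f =
      blockToeplitz n fun i => μ * f i + if i = 0 then 0 else f (i - 1) := by
  ext a b
  obtain ⟨ℓ, i⟩ := a
  obtain ⟨ℓ', j⟩ := b
  rw [Matrix.add_mul, Matrix.smul_mul, Matrix.one_mul, Matrix.add_apply, Matrix.smul_apply,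
    jordanDiagC_mul_apply]
  simp only [blockToeplitz, Matrix.of_apply, smul_eq_mul]
  have := j.isLt
  split_ifs <;> grind

theorem blockToeplitz_beta_zero (lam : ℂ) :
    blockToeplitz n (beta lam 0) = lam • 1 + jordanDiagC n := by
  ext a b
  obtain ⟨ℓ, i⟩ := a
  obtain ⟨ℓ', j⟩ := b
  simp only [blockToeplitz, beta, jordanDiagC, Matrix.add_apply, Matrix.smul_apply,
    Matrix.one_apply, sigma_fin_eq_iff, Matrix.of_apply, smul_eq_mul]
  split_ifs <;> grind

theorem blockToeplitz_beta_succ (lam : ℂ) (k : ℕ) :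
    blockToeplitz n (beta lam (k + 1)) =
      ((lam + k + 1) • 1 + jordanDiagC n) * blockToeplitz n (beta lam k) :=
  (smul_one_add_jordanDiagC_mul_blockToeplitz _ _).symm

theorem map_norm_smul_one_add_jordanDiagC (μ : ℂ) :
    (μ • (1 : Matrix ι ι ℂ) + jordanDiagC n).map (‖·‖) = ‖μ‖ • 1 + jordanDiagR n := by
  ext a b
  simp only [Matrix.map_apply, Matrix.add_apply, Matrix.smul_apply, Matrix.one_apply,
    jordanDiagC, jordanDiagR, Matrix.of_apply, smul_eq_mul, sigma_fin_eq_iff]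
  split_ifs <;> first | omega | simp

theorem sum_norm_blockToeplitz_apply (f : ℕ → ℂ) (b : ι) :
    ∑ t, ‖blockToeplitz n f t b‖ = ∑ u ∈ Finset.range (b.2 + 1), ‖f u‖ := by
  obtain ⟨ℓ, j⟩ := b
  rw [Fintype.sum_sigma, Fintype.sum_eq_single ℓ fun ℓ' hℓ' => Finset.sum_eq_zero fun x _ => by
    rw [blockToeplitz, Matrix.of_apply, if_neg fun h => hℓ' h.1, norm_zero]]
  simp only [blockToeplitz, Matrix.of_apply, true_and, apply_ite (‖·‖), norm_zero]
  rw [Fin.sum_univ_eq_sum_range (fun x => if x ≤ j then ‖f (j - x)‖ else 0), ← Finset.sum_filter,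
    ← Finset.sum_range_reflect (fun u => ‖f u‖), Nat.add_sub_cancel]
  congr 1
  ext x
  simp only [Finset.mem_filter, Finset.mem_range]
  omega

theorem mul_map_norm_blockToeplitz_beta_apply_le (lam : ℂ) (R : Matrix ι ι ℝ) (k : ℕ) (a b : ι) :
    (R * (blockToeplitz n (beta lam k)).map (‖·‖)) a b ≤ Qmat n lam R k a b := by
  rw [Matrix.mul_apply, Qmat, Matrix.of_apply, ← sum_norm_blockToeplitz_apply, Finset.mul_sum]
  refine Finset.sum_le_sum fun t _ => ?_
  rw [Matrix.map_apply]
  by_cases ht : t.1 = b.1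
  · obtain ⟨ℓ, x⟩ := t
    obtain ⟨ℓ', y⟩ := b
    subst ht
    exact mul_le_mul_of_nonneg_right
      (le_ciSup (f := fun i => R a ⟨ℓ, i⟩) (Set.finite_range _).bddAbove x) (norm_nonneg _)
  · rw [blockToeplitz, Matrix.of_apply, if_neg fun h => ht h.1, norm_zero, mul_zero, mul_zero]

theorem norm_prod_sub_blockToeplitz_beta_apply_le (lam : ℂ) (R : Matrix ι ι ℝ) :
    ∀ (m : ℕ) (B : Fin (m + 1) → Matrix ι ι ℂ),
      (∀ i : Fin (m + 1), ∀ a b, ‖(B i - ((lam + (i : ℕ)) • 1 + jordanDiagC n)) a b‖ ≤ R a b) →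
      ∀ a b, ‖((List.ofFn B).reverse.prod - blockToeplitz n (beta lam m)) a b‖ ≤
        RseqJ n lam R m a b
  | 0, B, hB => by simpa [blockToeplitz_beta_zero, RseqJ] using hB 0
  | m + 1, B, hB => by
    have ih := norm_prod_sub_blockToeplitz_beta_apply_le lam R m (fun i => B i.castSucc)
      fun i => by simpa using hB i.castSucc
    have hlast : ∀ a b,
        ‖(B (Fin.last (m + 1)) - ((lam + m + 1) • 1 + jordanDiagC n)) a b‖ ≤ R a b := by
      simpa [add_assoc] using hB (Fin.last (m + 1))
    have hE : ∀ a b, 0 ≤ RseqJ n lam R m a b := fun a b => (norm_nonneg _).trans (ih a b)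
    intro a b
    rw [List.ofFn_succ', List.concat_eq_append, List.reverse_append, List.reverse_singleton,
      List.singleton_append, List.prod_cons, blockToeplitz_beta_succ]
    refine (norm_mul_sub_mul_apply_le hlast ih a b).trans ?_
    rw [map_norm_smul_one_add_jordanDiagC, Matrix.add_mul, Matrix.smul_mul, Matrix.one_mul]
    simp only [RseqJ, Matrix.add_apply, Matrix.smul_apply]
    linarith [mul_map_norm_blockToeplitz_beta_apply_le lam R m a b,
      mul_apply_le_colMaxMat_mul_apply R _ hE a b]

end JordanBlocks

theorem stmt_15_general {s : ℕ} (n : Fin s → ℕ)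
    (lam : ℂ) (m : ℕ) (hm : 1 ≤ m)
    (R : Matrix ((ℓ : Fin s) × Fin (n ℓ)) ((ℓ : Fin s) × Fin (n ℓ)) ℝ)
    (B : Fin m → Matrix ((ℓ : Fin s) × Fin (n ℓ)) ((ℓ : Fin s) × Fin (n ℓ)) ℂ)
    (hB : ∀ i : Fin m, ∀ a b, ‖(B i a b - ((lam + (i : ℕ)) • (1 : Matrix ((ℓ : Fin s) × Fin (n ℓ))
        ((ℓ : Fin s) × Fin (n ℓ)) ℂ) + jordanDiagC n) a b)‖ ≤ R a b) :
    ∀ a b, ‖(((List.ofFn B).reverse.prod) a b -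
          (∑ i ∈ Finset.range (Finset.univ.sup n),
            beta lam (m - 1) i • jordanDiagC n ^ i) a b)‖ ≤
      RseqJ n lam R (m - 1) a b := by
  obtain ⟨m, rfl⟩ : ∃ k, m = k + 1 := ⟨m - 1, by omega⟩
  rw [Nat.add_sub_cancel, sum_smul_jordanDiagC_pow]
  exact norm_prod_sub_blockToeplitz_beta_apply_le lam R m B hB

theorem stmt_15 {s : ℕ} (hs : 1 ≤ s) (n : Fin s → ℕ) (hn : ∀ ℓ, 1 ≤ n ℓ)
    (lam : ℂ) (m : ℕ) (hm : 1 ≤ m)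
    (R : Matrix ((ℓ : Fin s) × Fin (n ℓ)) ((ℓ : Fin s) × Fin (n ℓ)) ℝ)
    (hR : ∀ i j, 0 ≤ R i j)
    (B : Fin m → Matrix ((ℓ : Fin s) × Fin (n ℓ)) ((ℓ : Fin s) × Fin (n ℓ)) ℂ)
    (hB : ∀ i : Fin m, ∀ a b, ‖(B i a b - ((lam + (i : ℕ)) • (1 : Matrix ((ℓ : Fin s) × Fin (n ℓ))
        ((ℓ : Fin s) × Fin (n ℓ)) ℂ) + jordanDiagC n) a b)‖ ≤ R a b) :
    ∀ a b, ‖(((List.ofFn B).reverse.prod) a b -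
          (∑ i ∈ Finset.range (Finset.univ.sup n),
            beta lam (m - 1) i • jordanDiagC n ^ i) a b)‖ ≤
      RseqJ n lam R (m - 1) a b :=
  stmt_15_general n lam m hm R B hB
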